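/- arXiv:math/9811002 — 12 statements merged into one kernel-verified Lean document; each statement's English description precedes it below -/
import Mathlib

section
/- The semi-closure of every β-open set is semi-regular. -/
open TopologicalSpace

variable {X Y : Type*} [TopologicalSpace X] [TopologicalSpace Y]

def SemiOpen (A : Set X) : Prop := A ⊆ closure (interior A)
def SemiClosed (A : Set X) : Prop := interior (closure A) ⊆ A
def SemiRegular (A : Set X) : Prop := SemiOpen A ∧ SemiClosed A
def ABSet (A : Set X) : Prop := ∃ U V : Set X, IsOpen U ∧ SemiRegular V ∧ A = U ∩ V
def BSet (A : Set X) : Prop := ∃ U V : Set X, IsOpen U ∧ SemiClosed V ∧ A = U ∩ V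
def BetaOpen (A : Set X) : Prop := A ⊆ closure (interior (closure A))
def BetaClosed (A : Set X) : Prop := interior (closure (interior A)) ⊆ A
def Preopen (A : Set X) : Prop := A ⊆ interior (closure A)
def Preclosed (A : Set X) : Prop := closure (interior A) ⊆ A
def ICSet (A : Set X) : Prop := IsClosed ((Subtype.val ⁻¹' interior A : Set A))
def sCl (A : Set X) : Set X := ⋂₀ {B : Set X | SemiClosed B ∧ A ⊆ B}

theorem stmt4 (A : Set X) (h : BetaOpen A) : SemiRegular (sCl A) := by
  have hclsub : closure (A ∪ interior (closure A)) ⊆ closure A := by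
    rw [closure_union]
    exact Set.union_subset subset_rfl
      (closure_mono interior_subset |>.trans (by rw [closure_closure]))
  have hsc : SemiClosed (A ∪ interior (closure A)) := fun x hx =>
    Or.inr (interior_mono hclsub hx)
  have heq : sCl A = A ∪ interior (closure A) := by
    apply subset_antisymm
    · exact Set.sInter_subset_of_mem ⟨hsc, Set.subset_union_left⟩
    · intro x hx
      rcases hx with hx | hx
      · exact fun B hB => hB.2 hx
      · intro B hB
        exact hB.1 (interior_mono (closure_mono hB.2) hx)
  rw [heq]
  constructor
  · -- SemiOpen
    have hi : interior (closure A) ⊆ interior (A ∪ interior (closure A)) :=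
      interior_maximal Set.subset_union_right isOpen_interior
    intro x hx
    rcases hx with hx | hx
    · exact closure_mono hi (h hx)
    · exact subset_closure (hi hx)
  · -- SemiClosed
    exact fun x hx => Or.inr (interior_mono hclsub hx)
end

section
/- A subset A of a topological space X is an AB-set if and only if A is semi-open and a B-set, if and only if A is β-open and a B-set. -/
open TopologicalSpace

variable {X Y : Type*} [TopologicalSpace X] [TopologicalSpace Y]

lemma ab_to_semi {A : Set X} (h : ABSet A) : SemiOpen A ∧ BSet A := by
  obtain ⟨U, V, hU, ⟨hVo, hVc⟩, rfl⟩ := h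
  refine ⟨?_, U, V, hU, hVc, rfl⟩
  intro x hx
  have h1 : x ∈ closure (U ∩ interior V) :=
    hU.inter_closure ⟨hx.1, hVo hx.2⟩
  refine closure_mono ?_ h1
  exact interior_maximal
    (Set.inter_subset_inter_right U interior_subset) (hU.inter isOpen_interior)

lemma semi_to_beta {A : Set X} (h : SemiOpen A) : BetaOpen A :=
  h.trans (closure_mono (interior_mono subset_closure))

lemma beta_b_to_ab {A : Set X} (h : BetaOpen A ∧ BSet A) : ABSet A := by
  obtain ⟨hβ, U, V, hU, hVc, rfl⟩ := h
  have hIV : interior (closure V) ⊆ interior V :=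
    interior_maximal hVc isOpen_interior
  have hsub : U ∩ V ⊆ closure (interior V) := by
    refine hβ.trans ?_
    refine closure_mono (Set.Subset.trans ?_ hIV)
    exact interior_mono (closure_mono Set.inter_subset_right)
  refine ⟨U, V ∩ closure (interior V), hU, ⟨?_, ?_⟩, ?_⟩
  · -- semi-open
    intro x hx
    have h1 : interior V ⊆ interior (V ∩ closure (interior V)) :=
      interior_maximal
        (Set.subset_inter interior_subset subset_closure) isOpen_interior
    exact closure_mono h1 hx.2
  · -- semi-closed
    intro x hx
    have h2 : closure (V ∩ closure (interior V)) ⊆ closure V :=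
      closure_mono Set.inter_subset_left
    have h3 : x ∈ interior (closure V) := interior_mono h2 hx
    refine ⟨hVc h3, ?_⟩
    have h4 : closure (V ∩ closure (interior V)) ⊆ closure (interior V) := by
      have := closure_mono (Set.inter_subset_right (s := V) (t := closure (interior V)))
      simpa using this
    exact interior_subset (interior_mono h4 hx)
  · ext x
    constructor
    · intro hx; exact ⟨hx.1, hx.2, hsub hx⟩
    · rintro ⟨h1, h2, _⟩; exact ⟨h1, h2⟩

theorem stmt5 (A : Set X) :
    (ABSet A ↔ SemiOpen A ∧ BSet A) ∧ (ABSet A ↔ BetaOpen A ∧ BSet A) := by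
  constructor
  · exact ⟨ab_to_semi, fun h => beta_b_to_ab ⟨semi_to_beta h.1, h.2⟩⟩
  · exact ⟨fun h => ⟨semi_to_beta (ab_to_semi h).1, (ab_to_semi h).2⟩, beta_b_to_ab⟩
end

section
/- If X is a submaximal space, then the collection of AB-sets of X equals the collection of β-open subsets of X. -/
open TopologicalSpace

variable {X Y : Type*} [TopologicalSpace X] [TopologicalSpace Y]

theorem stmt6 (h : ∀ A : Set X, Dense A → IsOpen A) :
    {A : Set X | ABSet A} = {A : Set X | BetaOpen A} := by
  ext A
  simp only [Set.mem_setOf_eq]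
  constructor
  · rintro ⟨U, V, hU, ⟨hVo, _⟩, rfl⟩
    have h1 : U ∩ V ⊆ closure (U ∩ interior V) := by
      intro x hx
      exact hU.inter_closure ⟨hx.1, hVo hx.2⟩
    intro x hx
    refine closure_mono ?_ (h1 hx)
    calc U ∩ interior V ⊆ interior (U ∩ V) :=
          interior_maximal (Set.inter_subset_inter_right U interior_subset)
            (hU.inter isOpen_interior)
      _ ⊆ interior (closure (U ∩ V)) := interior_mono subset_closure
  · intro hA
    refine ⟨A ∪ (closure A)ᶜ, closure A, ?_, ⟨?_, ?_⟩, ?_⟩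
    · apply h
      intro x
      have : (closure A)ᶜ ⊆ A ∪ (closure A)ᶜ := Set.subset_union_right
      rcases Classical.em (x ∈ interior (closure A)) with hx | hx
      · have : x ∈ closure A := interior_subset hx
        exact closure_mono Set.subset_union_left this
      · have : x ∈ closure (closure A)ᶜ := by
          rw [closure_compl]
          exact hx
        exact closure_mono Set.subset_union_right this
    · -- closure A is semi-open
      intro x hx
      have : closure A ⊆ closure (interior (closure A)) := by
        have := closure_mono hA
        rwa [closure_closure] at this
      exact this hx
    · -- closure A is semi-closed
      show interior (closure (closure A)) ⊆ closure A
      rw [closure_closure]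
      exact interior_subset
    · ext x
      constructor
      · intro hx
        exact ⟨Or.inl hx, subset_closure hx⟩
      · rintro ⟨hu, hc⟩
        rcases hu with hx | hx
        · exact hx
        · exact absurd hc hx
end

section
/- A subset A of a topological space is semi-regular if and only if A is semi-closed and an AB-set, if and only if A is β-closed and an AB-set. -/
open TopologicalSpace

variable {X Y : Type*} [TopologicalSpace X] [TopologicalSpace Y]

lemma open_inter_semiOpen {U V : Set X} (hU : IsOpen U) (hV : SemiOpen V) :
    SemiOpen (U ∩ V) := by
  intro x hx
  have h1 : x ∈ U ∩ closure (interior V) := ⟨hx.1, hV hx.2⟩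
  have h2 : U ∩ closure (interior V) ⊆ closure (U ∩ interior V) :=
    hU.inter_closure
  have h3 : U ∩ interior V ⊆ interior (U ∩ V) :=
    interior_maximal (Set.inter_subset_inter_right U interior_subset)
      (hU.inter isOpen_interior)
  exact closure_mono h3 (h2 h1)

lemma semiOpen_betaClosed_semiClosed {A : Set X} (hso : SemiOpen A) (hb : BetaClosed A) :
    SemiClosed A := by
  intro x hx
  have : closure A ⊆ closure (interior A) := by
    simpa using closure_mono hso
  exact hb (interior_mono this hx)

theorem stmt7 (A : Set X) :
    (SemiRegular A ↔ SemiClosed A ∧ ABSet A) ∧ (SemiRegular A ↔ BetaClosed A ∧ ABSet A) := by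
  have hab : SemiRegular A → ABSet A := fun h =>
    ⟨Set.univ, A, isOpen_univ, h, (Set.univ_inter A).symm⟩
  have habso : ABSet A → SemiOpen A := by
    rintro ⟨U, V, hU, hV, rfl⟩
    exact open_inter_semiOpen hU hV.1
  constructor
  · constructor
    · exact fun h => ⟨h.2, hab h⟩
    · rintro ⟨hsc, habs⟩
      exact ⟨habso habs, hsc⟩
  · constructor
    · refine fun h => ⟨fun x hx => h.2 ?_, hab h⟩
      exact interior_mono (closure_mono interior_subset) hx
    · rintro ⟨hb, habs⟩
      have hso := habso habs
      exact ⟨hso, semiOpen_betaClosed_semiClosed hso hb⟩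
end

section
/- A subset A of a topological space is open if and only if A is an AB-set and A is either preopen or interior-closed (meaning interior(A) is closed in the subspace A). -/
open TopologicalSpace

variable {X Y : Type*} [TopologicalSpace X] [TopologicalSpace Y]

theorem stmt8 (A : Set X) :
    IsOpen A ↔ ABSet A ∧ (Preopen A ∨ ICSet A) := by
  constructor
  · intro hA
    refine ⟨⟨A, Set.univ, hA, ⟨?_, ?_⟩, (Set.inter_univ A).symm⟩, Or.inl ?_⟩
    · simp [SemiOpen]
    · simp [SemiClosed]
    · intro x hx
      rw [← hA.interior_eq] at hx
      exact interior_mono subset_closure hx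
  · rintro ⟨⟨U, V, hU, ⟨hVo, hVc⟩, rfl⟩, h⟩
    rcases h with hp | hic
    · have key : U ∩ V = U ∩ interior (closure (U ∩ V)) := by
        apply Set.Subset.antisymm
        · intro x hx
          exact ⟨hx.1, hp hx⟩
        · intro x hx
          refine ⟨hx.1, hVc (interior_mono (closure_mono Set.inter_subset_right) hx.2)⟩
      rw [key]
      exact hU.inter isOpen_interior
    · -- extract closed F with interior (U∩V) = (U∩V) ∩ F
      rw [ICSet, isClosed_induced_iff] at hic
      obtain ⟨F, hF, hFeq⟩ := hic
      have hint : interior (U ∩ V) = (U ∩ V) ∩ F := by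
        apply Set.Subset.antisymm
        · intro x hx
          have hxA : x ∈ U ∩ V := interior_subset hx
          have : (⟨x, hxA⟩ : (U ∩ V : Set X)) ∈ (Subtype.val ⁻¹' interior (U ∩ V) : Set (U ∩ V : Set X)) := hx
          rw [← hFeq] at this
          exact ⟨hxA, this⟩
        · intro x hx
          have : (⟨x, hx.1⟩ : (U ∩ V : Set X)) ∈ (Subtype.val ⁻¹' F : Set (U ∩ V : Set X)) := hx.2
          rw [hFeq] at this
          exact this
      -- show U ∩ V ⊆ interior (U ∩ V)
      have hsub : U ∩ V ⊆ interior (U ∩ V) := by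
        intro x hx
        by_contra hxi
        have hxF : x ∉ F := fun hxF => hxi (hint ▸ ⟨hx, hxF⟩)
        set W := U ∩ Fᶜ with hW
        have hWo : IsOpen W := hU.inter hF.isOpen_compl
        have hxW : x ∈ W := ⟨hx.1, hxF⟩
        -- V semi-open: x ∈ closure (interior V)
        have hxc : x ∈ closure (interior V) := hVo hx.2
        have hne : (W ∩ interior V).Nonempty := by
          rcases mem_closure_iff.1 hxc W hWo hxW with ⟨y, hyW, hyV⟩
          exact ⟨y, hyW, hyV⟩
        obtain ⟨y, hyW, hyV⟩ := hne
        have hyA : y ∈ U ∩ V := ⟨hyW.1, interior_subset hyV⟩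
        have hyint : y ∈ interior (U ∩ V) :=
          interior_maximal (by
            intro z hz
            exact ⟨hz.1.1, interior_subset hz.2⟩)
            (hWo.inter isOpen_interior) ⟨hyW, hyV⟩
        have : y ∈ F := (hint ▸ hyint).2
        exact hyW.2 this
      exact isOpen_iff_mem_nhds.2 fun x hx => mem_interior_iff_mem_nhds.1 (hsub hx)
end

section
/- A topological space X is submaximal if and only if every preopen subset of X is an AB-set, if and only if every dense subset of X is an AB-set. -/
open TopologicalSpace

variable {X Y : Type*} [TopologicalSpace X] [TopologicalSpace Y]

lemma preopen_AB (h : ∀ A : Set X, Dense A → IsOpen A) (A : Set X) (hA : Preopen A) :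
    ABSet A := by
  have hD : Dense (A ∪ (closure A)ᶜ) := by
    rw [dense_iff_closure_eq, Set.eq_univ_iff_forall]
    intro x
    by_cases hx : x ∈ closure A
    · exact closure_mono Set.subset_union_left hx
    · exact subset_closure (Or.inr hx)
  have hAeq : A = (A ∪ (closure A)ᶜ) ∩ interior (closure A) := by
    apply Set.eq_of_subset_of_subset
    · exact fun x hx => ⟨Or.inl hx, hA hx⟩
    · rintro x ⟨hx1 | hx1, hx2⟩
      · exact hx1
      · exact absurd (interior_subset hx2) hx1
  have hAo : IsOpen A := hAeq ▸ (h _ hD).inter isOpen_interior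
  refine ⟨A, Set.univ, hAo, ⟨?_, ?_⟩, (Set.inter_univ A).symm⟩
  · simp [SemiOpen]
  · simp [SemiClosed]

lemma dense_preopen (A : Set X) (hA : Dense A) : Preopen A := by
  intro x hx
  rw [hA.closure_eq, interior_univ]
  trivial

lemma AB_submax (h : ∀ A : Set X, Dense A → ABSet A) (A : Set X) (hA : Dense A) :
    IsOpen A := by
  obtain ⟨U, V, hU, ⟨_, hVsc⟩, hAeq⟩ := h A hA
  have hV : V = Set.univ := by
    apply Set.eq_univ_of_univ_subset
    have : closure V = Set.univ := by
      apply Set.eq_univ_of_univ_subset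
      rw [← hA.closure_eq]
      exact closure_mono (by rw [hAeq]; exact Set.inter_subset_right)
    calc Set.univ = interior (closure V) := by rw [this, interior_univ]
    _ ⊆ V := hVsc
  rw [hAeq, hV, Set.inter_univ]
  exact hU

theorem stmt10 :
    ((∀ A : Set X, Dense A → IsOpen A) ↔ (∀ A : Set X, Preopen A → ABSet A)) ∧
    ((∀ A : Set X, Dense A → IsOpen A) ↔ (∀ A : Set X, Dense A → ABSet A)) := by
  constructor
  · exact ⟨preopen_AB, fun h => AB_submax fun A hA => h A (dense_preopen A hA)⟩
  · exact ⟨fun h A hA => preopen_AB h A (dense_preopen A hA), AB_submax⟩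
end

section
/- A topological space X is a partition space (every open set is closed) if and only if every AB-set in X is clopen, if and only if every AB-set in X is preclosed. -/
open TopologicalSpace

variable {X Y : Type*} [TopologicalSpace X] [TopologicalSpace Y]

theorem stmt11 :
    ((∀ A : Set X, IsOpen A → IsClosed A) ↔ (∀ A : Set X, ABSet A → IsClopen A)) ∧
    ((∀ A : Set X, IsOpen A → IsClosed A) ↔ (∀ A : Set X, ABSet A → Preclosed A)) := by
  have habs : ∀ A : Set X, IsOpen A → ABSet A := fun A hA =>
    ⟨A, Set.univ, hA, ⟨by simp [SemiOpen], by simp [SemiClosed]⟩, by simp⟩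
  constructor
  · constructor
    · intro h A hA
      obtain ⟨U, V, hU, ⟨hso, _⟩, rfl⟩ := hA
      have hVi : closure (interior V) = interior V := (h _ isOpen_interior).closure_eq
      have hVopen : IsOpen V := by
        have : V = interior V := subset_antisymm (hso.trans hVi.subset) interior_subset
        rw [this]; exact isOpen_interior
      exact ⟨h _ (hU.inter hVopen), hU.inter hVopen⟩
    · intro h A hA
      exact (h A (habs A hA)).isClosed
  · constructor
    · intro h A _
      calc closure (interior A) = interior A := (h _ isOpen_interior).closure_eq
        _ ⊆ A := interior_subset
    · intro h A hA
      have := h A (habs A hA)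
      rw [Preclosed, hA.interior_eq] at this
      exact isClosed_of_closure_subset this
end

section
/- A topological space X is indiscrete (the only open sets are ∅ and X) if and only if the only AB-sets of X are ∅ and X. -/
open TopologicalSpace

variable {X Y : Type*} [TopologicalSpace X] [TopologicalSpace Y]

theorem stmt12 :
    (∀ A : Set X, IsOpen A → A = ∅ ∨ A = Set.univ) ↔
    (∀ A : Set X, ABSet A → A = ∅ ∨ A = Set.univ) := by
  constructor
  · rintro h A ⟨U, V, hU, ⟨hVo, _⟩, rfl⟩
    rcases h U hU with rfl | rfl
    · left; simp
    · rcases h (interior V) isOpen_interior with hi | hi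
      · left
        have : V ⊆ (∅ : Set X) := by
          intro x hx
          have := hVo hx
          rw [hi, closure_empty] at this
          exact this
        rw [Set.univ_inter]
        exact Set.subset_empty_iff.mp this
      · right
        rw [Set.univ_inter]
        exact Set.eq_univ_of_univ_subset (hi ▸ interior_subset)
  · intro h A hA
    exact h A ⟨A, Set.univ, hA, ⟨by simp [SemiOpen], by simp [SemiClosed]⟩, by simp⟩
end

section
/- A topological space X is discrete if and only if every subset of X is an AB-set, if and only if every singleton of X is an AB-set. -/
open TopologicalSpace

variable {X Y : Type*} [TopologicalSpace X] [TopologicalSpace Y]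

theorem stmt13 :
    ((∀ A : Set X, IsOpen A) ↔ (∀ A : Set X, ABSet A)) ∧
    ((∀ A : Set X, IsOpen A) ↔ (∀ x : X, ABSet ({x} : Set X))) := by
  have fwd : (∀ A : Set X, IsOpen A) → (∀ A : Set X, ABSet A) := by
    intro h A
    exact ⟨A, Set.univ, h A, ⟨by simp [SemiOpen], by simp [SemiClosed]⟩, by simp⟩
  have key : (∀ x : X, ABSet ({x} : Set X)) → ∀ A : Set X, IsOpen A := by
    intro h
    have hs : ∀ x : X, IsOpen ({x} : Set X) := by
      intro x
      obtain ⟨U, V, hU, ⟨hVo, _⟩, hE⟩ := h x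
      have hx : x ∈ U ∩ V := by rw [← hE]; rfl
      have hxc : x ∈ closure (interior V) := hVo hx.2
      obtain ⟨y, hyU, hyV⟩ := mem_closure_iff.mp hxc U hU hx.1
      have hsub : U ∩ interior V ⊆ {x} := by
        intro z hz
        rw [hE]
        exact ⟨hz.1, interior_subset hz.2⟩
      have hyx : y = x := hsub ⟨hyU, hyV⟩
      have heq : ({x} : Set X) = U ∩ interior V := by
        apply subset_antisymm _ hsub
        intro z hz
        rw [Set.mem_singleton_iff] at hz
        rw [hz, ← hyx]
        exact ⟨hyU, hyV⟩
      rw [heq]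
      exact hU.inter isOpen_interior
    intro A
    have : A = ⋃ x ∈ A, {x} := by simp
    rw [this]
    exact isOpen_biUnion fun x _ => hs x
  exact ⟨⟨fwd, fun h => key (fun x => h {x})⟩, ⟨fun h x => fwd h {x}, key⟩⟩
end

section
/- A topological space X is hyperconnected (every nonempty open set is dense) if and only if every nonempty AB-set in X is dense. -/
open TopologicalSpace

variable {X Y : Type*} [TopologicalSpace X] [TopologicalSpace Y]

theorem stmt14 :
    (∀ A : Set X, IsOpen A → A.Nonempty → Dense A) ↔
    (∀ A : Set X, ABSet A → A.Nonempty → Dense A) := by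
  constructor
  · rintro h A ⟨U, V, hU, ⟨hVso, hVsc⟩, rfl⟩ hne
    -- interior V is nonempty
    have hVne : V.Nonempty := hne.mono Set.inter_subset_right
    have hiVne : (interior V).Nonempty := by
      by_contra hempty
      rw [Set.not_nonempty_iff_eq_empty] at hempty
      have : V ⊆ (∅ : Set X) := by
        have h2 : V ⊆ closure (interior V) := hVso
        simpa [hempty] using h2
      exact hVne.ne_empty (Set.subset_empty_iff.mp this)
    have hdiV : Dense (interior V) := h _ isOpen_interior hiVne
    have hV : V = Set.univ := by
      apply Set.eq_univ_of_univ_subset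
      have h1 : closure V = Set.univ := by
        apply Set.eq_univ_of_univ_subset
        calc Set.univ = closure (interior V) := hdiV.closure_eq.symm
          _ ⊆ closure V := closure_mono interior_subset
      have h2 : interior (closure V) ⊆ V := hVsc
      rw [h1, interior_univ] at h2
      exact h2
    rw [hV, Set.inter_univ] at hne ⊢
    exact h U hU hne
  · intro h A hA hne
    exact h A ⟨A, Set.univ, hA, ⟨by simp [SemiOpen], by simp [SemiClosed]⟩,
      (Set.inter_univ A).symm⟩ hne
end

section
/- A topological space X is semi-connected (X cannot be written as the disjoint union of two nonempty semi-open sets) if and only if X cannot be written as the disjoint union of two nonempty AB-sets. -/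
open TopologicalSpace

variable {X Y : Type*} [TopologicalSpace X] [TopologicalSpace Y]

theorem stmt15 :
    (¬ ∃ A B : Set X, SemiOpen A ∧ SemiOpen B ∧ A.Nonempty ∧ B.Nonempty ∧
        Disjoint A B ∧ A ∪ B = Set.univ) ↔
    (¬ ∃ A B : Set X, ABSet A ∧ ABSet B ∧ A.Nonempty ∧ B.Nonempty ∧
        Disjoint A B ∧ A ∪ B = Set.univ) := by
  have semiOpen_of_AB : ∀ A : Set X, ABSet A → SemiOpen A := by
    rintro A ⟨U, V, hU, ⟨hVso, _⟩, rfl⟩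
    intro x hx
    have h1 : x ∈ U ∩ closure (interior V) := ⟨hx.1, hVso hx.2⟩
    have h2 : x ∈ closure (U ∩ interior V) := hU.inter_closure h1
    refine closure_mono ?_ h2
    exact interior_maximal (Set.inter_subset_inter_right U interior_subset)
      (hU.inter isOpen_interior)
  have compl_sc : ∀ A : Set X, SemiOpen (X := X) Aᶜ → SemiClosed A := by
    intro A h x hx
    by_contra hxA
    have h2 : x ∈ closure (interior Aᶜ) := h hxA
    rw [interior_compl] at h2
    obtain ⟨y, hy1, hy2⟩ := (mem_closure_iff.mp h2) _ isOpen_interior hx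
    exact hy2 (interior_subset hy1)
  constructor
  · rintro h ⟨A, B, hA, hB, hAne, hBne, hd, hu⟩
    exact h ⟨A, B, semiOpen_of_AB A hA, semiOpen_of_AB B hB, hAne, hBne, hd, hu⟩
  · rintro h ⟨A, B, hA, hB, hAne, hBne, hd, hu⟩
    have hBc : B = Aᶜ := by
      ext x
      constructor
      · exact fun hx hxA => Set.disjoint_left.mp hd hxA hx
      · intro hx
        rcases (hu ▸ Set.mem_univ x : x ∈ A ∪ B) with h1 | h1
        · exact absurd h1 hx
        · exact h1
    have hAc : A = Bᶜ := by rw [hBc, compl_compl]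
    refine h ⟨A, B, ⟨Set.univ, A, isOpen_univ, ⟨hA, compl_sc A (hBc ▸ hB)⟩, (Set.univ_inter A).symm⟩,
      ⟨Set.univ, B, isOpen_univ, ⟨hB, compl_sc B (hAc ▸ hA)⟩, (Set.univ_inter B).symm⟩,
      hAne, hBne, hd, hu⟩
end

section
/- A function f : X → Y between topological spaces is continuous if and only if f is AB-continuous and either precontinuous or ic-continuous. -/
open TopologicalSpace

variable {X Y : Type*} [TopologicalSpace X] [TopologicalSpace Y]

lemma open_of_ab_pre {A : Set X} (h1 : ABSet A) (h2 : Preopen A) : IsOpen A := by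
  obtain ⟨U, V, hU, ⟨hVo, hVc⟩, rfl⟩ := h1
  have h3 : interior (closure (U ∩ V)) ⊆ V :=
    (interior_mono (closure_mono Set.inter_subset_right)).trans hVc
  have key : U ∩ V = U ∩ interior (closure (U ∩ V)) := by
    apply Set.Subset.antisymm
    · exact Set.subset_inter Set.inter_subset_left h2
    · exact Set.subset_inter Set.inter_subset_left (Set.inter_subset_right.trans h3)
  rw [key]
  exact hU.inter isOpen_interior

lemma open_of_ab_ic {A : Set X} (h1 : ABSet A) (h2 : ICSet A) : IsOpen A := by
  obtain ⟨U, V, hU, ⟨hVo, hVc⟩, rfl⟩ := h1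
  set A := U ∩ V with hA
  obtain ⟨C, hC, hCeq⟩ := isClosed_induced_iff.mp h2
  have hAC : A ∩ C = interior A := by
    have h := congrArg (Set.image (Subtype.val : A → X)) hCeq
    rw [Subtype.image_preimage_coe, Subtype.image_preimage_coe] at h
    rw [h]
    exact Set.inter_eq_right.mpr interior_subset
  have hsub : A ⊆ interior A := by
    intro x hx
    by_contra hxi
    have hxC : x ∉ C := fun hc => hxi (hAC ▸ ⟨hx, hc⟩)
    set W := U ∩ Cᶜ with hW
    have hWopen : IsOpen W := hU.inter hC.isOpen_compl
    have hxW : x ∈ W := ⟨hx.1, hxC⟩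
    have hWdisj : W ∩ interior A = ∅ := by
      ext y
      simp only [Set.mem_inter_iff, Set.mem_empty_iff_false, iff_false, not_and]
      intro hyW hyA
      exact hyW.2 (hAC ▸ hyA : y ∈ A ∩ C).2
    have hxcl : x ∈ closure (interior V) := hVo hx.2
    obtain ⟨y, hyW, hyV⟩ := (mem_closure_iff.mp hxcl) W hWopen hxW
    have hyA : y ∈ interior A := by
      have : U ∩ interior V ⊆ interior A :=
        interior_maximal (Set.inter_subset_inter_right U interior_subset)
          (hU.inter isOpen_interior)
      exact this ⟨hyW.1, hyV⟩
    have : y ∈ (∅ : Set X) := hWdisj ▸ (⟨hyW, hyA⟩ : y ∈ W ∩ interior A)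
    exact this
  exact isOpen_iff_mem_nhds.mpr fun x hx => mem_interior_iff_mem_nhds.mp (hsub hx)

theorem stmt18 (f : X → Y) :
    Continuous f ↔ (∀ V : Set Y, IsOpen V → ABSet (f ⁻¹' V)) ∧
      ((∀ V : Set Y, IsOpen V → Preopen (f ⁻¹' V)) ∨
       (∀ V : Set Y, IsOpen V → ICSet (f ⁻¹' V))) := by
  constructor
  · intro hf
    refine ⟨fun V hV => ?_, Or.inl fun V hV => ?_⟩
    · refine ⟨f ⁻¹' V, Set.univ, hV.preimage hf, ⟨?_, ?_⟩, (Set.inter_univ _).symm⟩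
      · simp [SemiOpen]
      · simp [SemiClosed]
    · exact ((hV.preimage hf).subset_interior_iff.mpr le_rfl).trans
        (interior_mono subset_closure)
  · rintro ⟨hab, hpre | hic⟩
    · exact continuous_def.mpr fun V hV => open_of_ab_pre (hab V hV) (hpre V hV)
    · exact continuous_def.mpr fun V hV => open_of_ab_ic (hab V hV) (hic V hV)
end
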